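/- For every initial condition a0 ∈ ℝ^L with all components ≥ 0, the auxin transport system admits a unique solution defined on all of [0,∞): there exists a unique differentiable a : [0,∞) → ℝ^L with a(0) = a0 and a'(t) = f(a(t)) for all t ≥ 0, and this solution satisfies a_i(t) ≥ 0 for every i and every t ≥ 0. -/

import Mathlib

open Finset Filter

/-- `auxN G κ a i = κ + ∑_{j ~ i} a_j`. -/
noncomputable def auxN {L : ℕ} (G : SimpleGraph (Fin L)) [DecidableRel G.Adj] (κ : ℝ)
    (a : Fin L → ℝ) (i : Fin L) : ℝ :=
  κ + ∑ j ∈ G.neighborFinset i, a j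

/-- The auxin transport vector field
`f_i(a) = D·∑_{k ~ i}(a_k − a_i) + T·∑_{k ~ i}(a_k·a_i/N_k(a) − a_i·a_k/N_i(a))`. -/
noncomputable def auxF {L : ℕ} (G : SimpleGraph (Fin L)) [DecidableRel G.Adj] (κ D T : ℝ)
    (a : Fin L → ℝ) (i : Fin L) : ℝ :=
  D * ∑ k ∈ G.neighborFinset i, (a k - a i) +
    T * ∑ k ∈ G.neighborFinset i,
      (a k * a i / auxN G κ a k - a i * a k / auxN G κ a i)

/-!
The flux `auxF` is a sum over edges of antisymmetric terms, so the total mass `∑ i, a i` is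
conserved; and where a component `a i` vanishes only the diffusion term `D ∑ a k ≥ 0` survives,
so it cannot become negative. Hence the box `[0, ∑ i, a0 i]^L` is forward invariant. On it all
denominators are at least `κ > 0` and `auxF` is smooth, so composing `auxF` with the coordinatewise
clamp onto the box gives a globally Lipschitz, bounded field. Its global solution stays in the box,
where the two fields agree. Uniqueness holds because `auxF` is locally Lipschitz along this
solution.
-/

open Set
open scoped NNReal Topology

theorem SimpleGraph.sum_sum_neighborFinset_comm {V M : Type*} [Fintype V] [AddCommMonoid M]
    (G : SimpleGraph V) [DecidableRel G.Adj] (h : V → V → M) :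
    ∑ i, ∑ k ∈ G.neighborFinset i, h i k = ∑ i, ∑ k ∈ G.neighborFinset i, h k i :=
  Finset.sum_comm' fun i k => by simp [G.adj_comm]

section Auxin

variable {L : ℕ} (G : SimpleGraph (Fin L)) [DecidableRel G.Adj]

theorem sum_auxF_eq_zero (κ D T : ℝ) (x : Fin L → ℝ) : ∑ i, auxF G κ D T x i = 0 := by
  set g : Fin L → Fin L → ℝ := fun k i => D * x k + T * (x k * x i / auxN G κ x k)
  have hF : ∀ i, auxF G κ D T x i = ∑ k ∈ G.neighborFinset i, (g k i - g i k) := fun i => by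
    simp only [auxF, g, Finset.mul_sum, ← Finset.sum_add_distrib]
    exact Finset.sum_congr rfl fun k _ => by ring
  simp only [hF, Finset.sum_sub_distrib, G.sum_sum_neighborFinset_comm (fun i k => g k i),
    sub_self]

theorem auxF_nonneg_of_eq_zero {κ D T : ℝ} (hD : 0 ≤ D) {x : Fin L → ℝ} (hx : 0 ≤ x)
    {i : Fin L} (hi : x i = 0) : 0 ≤ auxF G κ D T x i := by
  simp only [auxF, hi, mul_zero, zero_mul, zero_div, sub_self, sub_zero, Finset.sum_const_zero,
    add_zero]
  exact mul_nonneg hD (Finset.sum_nonneg fun k _ => hx k)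

theorem auxN_pos {κ : ℝ} (hκ : 0 < κ) {x : Fin L → ℝ} (hx : 0 ≤ x) (k : Fin L) :
    0 < auxN G κ x k :=
  add_pos_of_pos_of_nonneg hκ (Finset.sum_nonneg fun j _ => hx j)

theorem isOpen_setOf_forall_auxN_pos (κ : ℝ) :
    IsOpen {x : Fin L → ℝ | ∀ k, 0 < auxN G κ x k} := by
  simp only [ofPred_forall]
  exact isOpen_iInter_of_finite fun k => isOpen_lt continuous_const (by unfold auxN; fun_prop)

theorem contDiffOn_auxF (κ D T : ℝ) {n : WithTop ℕ∞} :
    ContDiffOn ℝ n (auxF G κ D T) {x | ∀ k, 0 < auxN G κ x k} := by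
  have hN : ∀ k, ContDiff ℝ n fun x : Fin L → ℝ => auxN G κ x k := fun k => by
    unfold auxN; fun_prop
  refine contDiffOn_pi.2 fun i => ?_
  unfold auxF
  refine (contDiffOn_const.mul (by fun_prop)).add (contDiffOn_const.mul
    (ContDiffOn.sum fun k _ => ContDiffOn.sub ?_ ?_))
  · exact (by fun_prop : ContDiff ℝ n fun x : Fin L → ℝ => x k * x i).contDiffOn.div
      (hN k).contDiffOn fun x hx => (hx k).ne'
  · exact (by fun_prop : ContDiff ℝ n fun x : Fin L → ℝ => x i * x k).contDiffOn.div
      (hN i).contDiffOn fun x hx => (hx i).ne'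

end Auxin

section ODE

variable {E : Type*} [NormedAddCommGroup E] [NormedSpace ℝ E]

theorem exists_hasDerivAt_Ioo_of_lipschitzWith [CompleteSpace E] {F : E → E} {K : ℝ≥0} {C : ℝ}
    (hF : LipschitzWith K F) (hC : ∀ x, ‖F x‖ ≤ C) (x₀ : E) (r : ℝ≥0) :
    ∃ α : ℝ → E, α 0 = x₀ ∧ ∀ t ∈ Ioo (-(r : ℝ)) r, HasDerivAt α (F (α t)) t := by
  have hPL : IsPicardLindelof (fun _ => F) (tmin := -r) (tmax := r)
      ⟨0, by simp⟩ x₀ (C.toNNReal * r) 0 C.toNNReal K :=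
    .of_time_independent (fun x _ => (hC x).trans (Real.le_coe_toNNReal C)) hF.lipschitzOnWith
      (by simp)
  obtain ⟨α, hα0, hα⟩ := hPL.exists_eq_forall_mem_Icc_hasDerivWithinAt₀
  exact ⟨α, hα0, fun t ht => (hα t (Ioo_subset_Icc_self ht)).hasDerivAt (Icc_mem_nhds ht.1 ht.2)⟩

theorem exists_hasDerivAt_of_lipschitzWith [CompleteSpace E] {F : E → E} {K : ℝ≥0} {C : ℝ}
    (hF : LipschitzWith K F) (hC : ∀ x, ‖F x‖ ≤ C) (x₀ : E) :
    ∃ a : ℝ → E, a 0 = x₀ ∧ ∀ t, HasDerivAt a (F (a t)) t := by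
  choose α hα0 hα using exists_hasDerivAt_Ioo_of_lipschitzWith hF hC x₀
  have hagree : ∀ r r' : ℝ≥0, ∀ t : ℝ, |t| < r → |t| < r' → α r t = α r' t := by
    intro r r' t htr htr'
    have hsub : ∀ ρ : ℝ≥0, min r r' ≤ ρ → Ioo (-(min r r' : ℝ)) (min r r') ⊆ Ioo (-ρ : ℝ) ρ :=
      fun ρ hρ => Ioo_subset_Ioo (by simpa using hρ) (by exact_mod_cast hρ)
    have ht : t ∈ Ioo (-(min r r' : ℝ)) (min r r') := abs_lt.1 (by simp [htr, htr'])
    refine ODE_solution_unique_of_mem_Ioo (v := fun _ => F) (s := fun _ => univ)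
      (fun _ _ => hF.lipschitzOnWith) ⟨?_, ?_⟩
      (fun s hs => ⟨hα r s (hsub r (min_le_left r r') hs), trivial⟩)
      (fun s hs => ⟨hα r' s (hsub r' (min_le_right r r') hs), trivial⟩)
      ((hα0 r).trans (hα0 r').symm) ht <;> linarith [ht.1, ht.2]
  refine ⟨fun t => α (‖t‖₊ + 1) t, hα0 1 ▸ by simp, fun t => ?_⟩
  have hnear : ∀ᶠ s in 𝓝 t, |s| < ((‖t‖₊ + 1 : ℝ≥0) : ℝ) :=
    continuous_abs.continuousAt.eventually_lt continuousAt_const (by simp)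
  refine (hα _ t (abs_lt.1 (by simp))).congr_of_eventuallyEq ?_
  filter_upwards [hnear] with s hs
  exact hagree _ _ s (by simp) hs

end ODE

section Uniqueness

variable {E : Type*} [NormedAddCommGroup E] [NormedSpace ℝ E] {v : E → E} {a b : ℝ → E} {t₀ : ℝ}

theorem eventuallyEq_nhdsGE_of_lipschitzOnWith {K : ℝ≥0} {s : Set E}
    (hv : LipschitzOnWith K v s) (hs : s ∈ 𝓝 (a t₀))
    (ha : ∀ t ≥ t₀, HasDerivAt a (v (a t)) t) (hb : ∀ t ≥ t₀, HasDerivAt b (v (b t)) t)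
    (h : a t₀ = b t₀) : a =ᶠ[𝓝[≥] t₀] b := by
  have hmem : ∀ᶠ t in 𝓝 t₀, a t ∈ s ∧ b t ∈ s :=
    (ha t₀ le_rfl).continuousAt.eventually_mem hs |>.and
      ((hb t₀ le_rfl).continuousAt.eventually_mem (h ▸ hs))
  obtain ⟨u, hu, hsub⟩ := mem_nhdsGE_iff_exists_Icc_subset.1 (nhdsWithin_le_nhds hmem)
  refine mem_of_superset (Icc_mem_nhdsGE hu) (ODE_solution_unique_of_mem_Icc_right
    (v := fun _ => v) (s := fun _ => s) (fun _ _ => hv)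
    (HasDerivAt.continuousOn fun t ht => ha t ht.1) (fun t ht => (ha t ht.1).hasDerivWithinAt)
    (fun t ht => (hsub (Ico_subset_Icc_self ht)).1)
    (HasDerivAt.continuousOn fun t ht => hb t ht.1) (fun t ht => (hb t ht.1).hasDerivWithinAt)
    (fun t ht => (hsub (Ico_subset_Icc_self ht)).2) h)

theorem eqOn_Ici_of_hasDerivAt_of_lipschitzOnWith
    (hv : ∀ t ≥ t₀, ∃ K, ∃ s ∈ 𝓝 (a t), LipschitzOnWith K v s)
    (ha : ∀ t ≥ t₀, HasDerivAt a (v (a t)) t) (hb : ∀ t ≥ t₀, HasDerivAt b (v (b t)) t)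
    (h : a t₀ = b t₀) : EqOn a b (Ici t₀) := by
  intro T hT
  refine IsClosed.Icc_subset_of_forall_mem_nhdsWithin (s := {t | a t = b t}) ?_ h ?_ ⟨hT, le_rfl⟩
  · rw [inter_comm]
    exact ((HasDerivAt.continuousOn fun t ht => ha t ht.1).prodMk
      (HasDerivAt.continuousOn fun t ht => hb t ht.1)).preimage_isClosed_of_isClosed
      isClosed_Icc isClosed_diagonal
  · rintro x ⟨hx, hx₀, -⟩
    obtain ⟨K, s, hs, hK⟩ := hv x hx₀
    exact nhdsWithin_mono _ Set.Ioi_subset_Ici_self <|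
      eventuallyEq_nhdsGE_of_lipschitzOnWith hK hs (fun t ht => ha t (hx₀.trans ht))
        (fun t ht => hb t (hx₀.trans ht)) hx

end Uniqueness

theorem nonneg_of_hasDerivAt_of_deriv_nonneg_of_neg {u u' : ℝ → ℝ}
    (hu : ∀ t ≥ 0, HasDerivAt u (u' t) t) (h0 : 0 ≤ u 0) (hu' : ∀ t ≥ 0, u t < 0 → 0 ≤ u' t)
    {t : ℝ} (ht : 0 ≤ t) : 0 ≤ u t := by
  -- Fence `-u` by the barriers `ε * (s + 1)` and let `ε → 0`.
  have hle : ∀ ε > 0, -u t ≤ ε * (t + 1) := fun ε hε =>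
    image_le_of_deriv_right_lt_deriv_boundary (f := fun s => -u s) (B := fun s => ε * (s + 1))
      (HasDerivAt.continuousOn fun s hs => (hu s hs.1).neg)
      (fun s hs => (hu s hs.1).neg.hasDerivWithinAt) (by linarith)
      (fun s => ((hasDerivAt_id s).add_const 1).const_mul ε)
      (fun s hs hs' => by
        have := hu' s hs.1 (by nlinarith [hs.1])
        simp only [mul_one]; linarith)
      ⟨ht, le_rfl⟩
  refine neg_nonpos.1 (le_of_forall_pos_le_add fun ε hε => ?_)
  simpa [div_mul_cancel₀ _ (by positivity : t + 1 ≠ 0)] using hle (ε / (t + 1)) (by positivity)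

section Orthant

variable {ι : Type*} {v : (ι → ℝ) → ι → ℝ} {a : ℝ → ι → ℝ}

theorem sum_apply_eq_of_hasDerivAt [Fintype ι] (ha : ∀ t, HasDerivAt a (v (a t)) t)
    (hv : ∀ x, ∑ i, v x i = 0) (t : ℝ) : ∑ i, a t i = ∑ i, a 0 i := by
  have hsum : ∀ s, HasDerivAt (fun s => ∑ i, a s i) 0 s := fun s => by
    simpa only [hv] using HasDerivAt.fun_sum (u := .univ) fun i _ => hasDerivAt_pi.1 (ha s) i
  exact is_const_of_deriv_eq_zero (fun s => (hsum s).differentiableAt) (fun s => (hsum s).deriv)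
    t 0

theorem nonneg_of_hasDerivAt_of_apply_nonneg_of_neg (ha : ∀ t ≥ 0, HasDerivAt a (v (a t)) t)
    (hv : ∀ x i, x i < 0 → 0 ≤ v x i) (h0 : 0 ≤ a 0) {t : ℝ} (ht : 0 ≤ t) : 0 ≤ a t := fun i =>
  nonneg_of_hasDerivAt_of_deriv_nonneg_of_neg (fun s hs => hasDerivAt_pi.1 (ha s hs) i) (h0 i)
    (fun _ _ hs => hv _ i hs) ht

noncomputable def boxClamp (S : ℝ) (hS : 0 ≤ S) (x : ι → ℝ) : ι → ℝ :=
  fun i => projIcc 0 S hS (x i)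

variable {S : ℝ} (hS : 0 ≤ S)

theorem lipschitzWith_boxClamp [Fintype ι] : LipschitzWith 1 (boxClamp (ι := ι) S hS) := by
  refine LipschitzWith.of_dist_le_mul fun x y => ?_
  rw [NNReal.coe_one, one_mul, dist_pi_le_iff dist_nonneg]
  exact fun i => ((LipschitzWith.projIcc hS).dist_le_mul (x i) (y i)).trans
    (by simpa using dist_le_pi_dist x y i)

theorem boxClamp_mem_Icc (x : ι → ℝ) : boxClamp S hS x ∈ Icc 0 fun _ => S :=
  ⟨fun i => (projIcc 0 S hS (x i)).2.1, fun i => (projIcc 0 S hS (x i)).2.2⟩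

theorem boxClamp_eq_self {x : ι → ℝ} (hx : x ∈ Icc 0 fun _ => S) : boxClamp S hS x = x :=
  funext fun i => congrArg Subtype.val (projIcc_of_mem hS ⟨hx.1 i, hx.2 i⟩)

theorem boxClamp_apply_eq_zero {x : ι → ℝ} {i : ι} (hi : x i ≤ 0) : boxClamp S hS x i = 0 :=
  congrArg Subtype.val (projIcc_of_le_left hS hi)

end Orthant

theorem exists_auxin_solution_mem_Icc {L : ℕ} (G : SimpleGraph (Fin L)) [DecidableRel G.Adj]
    {κ D : ℝ} (T : ℝ) (hκ : 0 < κ) (hD : 0 ≤ D) {a0 : Fin L → ℝ} (ha0 : 0 ≤ a0) :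
    ∃ a : ℝ → Fin L → ℝ, a 0 = a0 ∧
      ∀ t ≥ 0, HasDerivAt a (auxF G κ D T (a t)) t ∧ a t ∈ Icc 0 fun _ => ∑ i, a0 i := by
  set S := ∑ i, a0 i
  have hS : 0 ≤ S := Finset.sum_nonneg fun i _ => ha0 i
  have hBU : Icc 0 (fun _ => S) ⊆ {x | ∀ k, 0 < auxN G κ x k} := fun x hx => auxN_pos G hκ hx.1
  obtain ⟨K, hK⟩ := ((contDiffOn_auxF G κ D T).mono hBU).exists_lipschitzOnWith one_ne_zero
    (convex_Icc _ _) isCompact_Icc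
  obtain ⟨C, hC⟩ := isCompact_Icc.exists_bound_of_continuousOn
    ((contDiffOn_auxF G κ D T (n := 0)).continuousOn.mono hBU)
  set F : (Fin L → ℝ) → Fin L → ℝ := fun x => auxF G κ D T (boxClamp S hS x)
  have hF : LipschitzWith (K * 1) F := lipschitzOnWith_univ.1 <|
    hK.comp (lipschitzWith_boxClamp hS).lipschitzOnWith fun x _ => boxClamp_mem_Icc hS x
  obtain ⟨a, ha0', ha⟩ :=
    exists_hasDerivAt_of_lipschitzWith hF (fun x => hC _ (boxClamp_mem_Icc hS x)) a0
  have hnonneg : ∀ t ≥ 0, 0 ≤ a t := fun t =>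
    nonneg_of_hasDerivAt_of_apply_nonneg_of_neg (fun t _ => ha t)
      (fun x i hi => auxF_nonneg_of_eq_zero G hD (boxClamp_mem_Icc hS x).1
        (boxClamp_apply_eq_zero hS hi.le)) (ha0' ▸ ha0)
  have hsum : ∀ t, ∑ i, a t i = S := fun t => by
    rw [sum_apply_eq_of_hasDerivAt ha (fun x => sum_auxF_eq_zero G κ D T _) t, ha0']
  have hbox : ∀ t ≥ 0, a t ∈ Icc 0 fun _ => S := fun t ht =>
    ⟨hnonneg t ht, fun i => hsum t ▸ single_le_sum (fun j _ => hnonneg t ht j) (mem_univ i)⟩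
  refine ⟨a, ha0', fun t ht => ⟨?_, hbox t ht⟩⟩
  simpa only [F, boxClamp_eq_self hS (hbox t ht)] using ha t

theorem auxin_existence_uniqueness_general {L : ℕ} (G : SimpleGraph (Fin L))
    [DecidableRel G.Adj] (κ D T : ℝ) (hκ : 0 < κ) (hD : 0 ≤ D)
    (a0 : Fin L → ℝ) (ha0 : ∀ i, 0 ≤ a0 i) :
    ∃ a : ℝ → Fin L → ℝ,
      a 0 = a0 ∧
      (∀ t, 0 ≤ t → HasDerivAt a (auxF G κ D T (a t)) t) ∧
      (∀ t, 0 ≤ t → ∀ i, 0 ≤ a t i) ∧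
      (∀ b : ℝ → Fin L → ℝ, b 0 = a0 →
        (∀ t, 0 ≤ t → HasDerivAt b (auxF G κ D T (b t)) t) →
        ∀ t, 0 ≤ t → b t = a t) := by
  obtain ⟨a, ha0', ha⟩ := exists_auxin_solution_mem_Icc G T hκ hD ha0
  refine ⟨a, ha0', fun t ht => (ha t ht).1, fun t ht => (ha t ht).2.1, fun b hb0 hb t ht => ?_⟩
  have hlip : ∀ t ≥ 0, ∃ K, ∃ s ∈ 𝓝 (a t), LipschitzOnWith K (auxF G κ D T) s := fun t ht =>
    ((contDiffOn_auxF G κ D T).contDiffAt ((isOpen_setOf_forall_auxN_pos G κ).mem_nhds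
      (auxN_pos G hκ (ha t ht).2.1))).exists_lipschitzOnWith
  exact (eqOn_Ici_of_hasDerivAt_of_lipschitzOnWith hlip (fun t ht => (ha t ht).1) hb
    (ha0'.trans hb0.symm) (mem_Ici.2 ht)).symm

/-- Existence, uniqueness and nonnegativity of the global solution on `[0,∞)`. -/
theorem auxin_existence_uniqueness {L : ℕ} (hL : 1 ≤ L) (G : SimpleGraph (Fin L))
    [DecidableRel G.Adj] (κ D T : ℝ) (hκ : 0 < κ) (hD : 0 ≤ D) (hT : 0 < T)
    (a0 : Fin L → ℝ) (ha0 : ∀ i, 0 ≤ a0 i) :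
    ∃ a : ℝ → Fin L → ℝ,
      a 0 = a0 ∧
      (∀ t, 0 ≤ t → HasDerivAt a (auxF G κ D T (a t)) t) ∧
      (∀ t, 0 ≤ t → ∀ i, 0 ≤ a t i) ∧
      (∀ b : ℝ → Fin L → ℝ, b 0 = a0 →
        (∀ t, 0 ≤ t → HasDerivAt b (auxF G κ D T (b t)) t) →
        ∀ t, 0 ≤ t → b t = a t) :=
  auxin_existence_uniqueness_general G κ D T hκ hD a0 ha0
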